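/- Every locally compact Hausdorff band of topological groups is a normal topological space. -/

import Mathlib

open Set TopologicalSpace

/-- The principal left ideal (with `a` adjoined) generated by `a`: `{a} ∪ {s*a : s ∈ S}`. -/
def leftIdeal {S : Type*} [Semigroup S] (a : S) : Set S :=
  insert a {x | ∃ s, x = s * a}

/-- The principal right ideal (with `a` adjoined) generated by `a`: `{a} ∪ {a*s : s ∈ S}`. -/
def rightIdeal {S : Type*} [Semigroup S] (a : S) : Set S :=
  insert a {x | ∃ s, x = a * s}

/-- Green's relation ℋ on a semigroup. -/
def greenH {S : Type*} [Semigroup S] (a b : S) : Prop :=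
  leftIdeal a = leftIdeal b ∧ rightIdeal a = rightIdeal b

/-- The ℋ-class of an element. -/
def HClass {S : Type*} [Semigroup S] (x : S) : Set S := {y | greenH y x}

/-- A semigroup is completely regular if every element is completely regular. -/
def CompletelyRegularSemigroup (S : Type*) [Semigroup S] : Prop :=
  ∀ a : S, ∃ x, a = a * x * a ∧ a * x = x * a

/-- Green's relation ℋ is a congruence. -/
def HIsCongruence (S : Type*) [Semigroup S] : Prop :=
  ∀ a b c : S, greenH a b → greenH (a * c) (b * c) ∧ greenH (c * a) (c * b)

/-- A cryptogroup is a completely regular semigroup in which ℋ is a congruence. -/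
def IsCryptogroup (S : Type*) [Semigroup S] : Prop :=
  CompletelyRegularSemigroup S ∧ HIsCongruence S

/-- In a cryptogroup every ℋ-class is a group; `idp x` (written `x⁰`) is the identity of the
ℋ-class of `x`, and `inv x` (written `x⁻¹`) is the inverse of `x` inside its ℋ-class. -/
structure CryptoOps (S : Type*) [Semigroup S] where
  idp : S → S
  inv : S → S
  idp_mem : ∀ x, greenH (idp x) x
  idp_mul : ∀ x y, greenH y x → idp x * y = y
  mul_idp : ∀ x y, greenH y x → y * idp x = y
  inv_mem : ∀ x, greenH (inv x) x
  mul_inv : ∀ x, x * inv x = idp x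
  inv_mul : ∀ x, inv x * x = idp x

/-- The set `E(S)` of idempotents of a semigroup. -/
def idemSet (S : Type*) [Semigroup S] : Set S := {e | e * e = e}

/-- `(xU)* = {y ∈ S : x⁻¹*y ∈ U and x⁰ = y⁰}`. -/
def lstar {S : Type*} [Semigroup S] (ops : CryptoOps S) (x : S) (U : Set S) : Set S :=
  {y | ops.inv x * y ∈ U ∧ ops.idp x = ops.idp y}

/-- `(Ux)* = {y ∈ S : y*x⁻¹ ∈ U and x⁰ = y⁰}`. -/
def rstar {S : Type*} [Semigroup S] (ops : CryptoOps S) (U : Set S) (x : S) : Set S :=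
  {y | y * ops.inv x ∈ U ∧ ops.idp x = ops.idp y}

/-- `(AB)* = ⋃_{a ∈ A} (aB)*`. -/
def setStar {S : Type*} [Semigroup S] (ops : CryptoOps S) (A B : Set S) : Set S :=
  ⋃ a ∈ A, lstar ops a B

/-- A full subcryptogroup: contains all idempotents, and closed under multiplication
and inversion. -/
def IsFullSubcryptogroup {S : Type*} [Semigroup S] (ops : CryptoOps S) (K : Set S) : Prop :=
  idemSet S ⊆ K ∧ (∀ x ∈ K, ∀ y ∈ K, x * y ∈ K) ∧ (∀ x ∈ K, ops.inv x ∈ K)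

/-!
The ℋ-classes of `S` are open and partition it, and a space partitioned into open normal
subspaces is normal. Each ℋ-class is a locally compact Hausdorff topological group `G`. The
subgroup of `G` generated by a compact symmetric neighbourhood `V` of `1` is open and equals
`⋃ n, V ^ n`, hence is σ-compact; its cosets partition `G` into open, locally compact,
σ-compact Hausdorff subspaces, which are paracompact and therefore normal.
-/

open scoped Pointwise

theorem IsOpen.separatedNhds_inter {X : Type*} [TopologicalSpace X] {F s t : Set X}
    (hF : IsOpen F) [NormalSpace F] (hs : IsClosed s) (ht : IsClosed t) (hst : Disjoint s t) :
    SeparatedNhds (s ∩ F) (t ∩ F) := by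
  obtain ⟨U, V, hU, hV, hsU, htV, hUV⟩ := normal_separation (X := F)
    (hs.preimage continuous_subtype_val) (ht.preimage continuous_subtype_val)
    (hst.preimage Subtype.val)
  exact ⟨Subtype.val '' U, Subtype.val '' V, hF.isOpenMap_subtype_val U hU,
    hF.isOpenMap_subtype_val V hV, fun x hx => ⟨⟨x, hx.2⟩, hsU hx.1, rfl⟩,
    fun x hx => ⟨⟨x, hx.2⟩, htV hx.1, rfl⟩,
    (disjoint_image_iff Subtype.val_injective).2 hUV⟩

theorem NormalSpace.of_isOpen_fibers {X ι : Type*} [TopologicalSpace X] (f : X → ι)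
    (hopen : ∀ i, IsOpen (f ⁻¹' {i})) (hnormal : ∀ i, NormalSpace (f ⁻¹' {i})) :
    NormalSpace X := by
  refine ⟨fun s t hs ht hst => ?_⟩
  choose U V hU hV hsU htV hUV using fun i => (hopen i).separatedNhds_inter hs ht hst
  refine ⟨⋃ i, U i ∩ f ⁻¹' {i}, ⋃ i, V i ∩ f ⁻¹' {i},
    isOpen_iUnion fun i => (hU i).inter (hopen i), isOpen_iUnion fun i => (hV i).inter (hopen i),
    fun x hx => mem_iUnion.2 ⟨f x, hsU _ ⟨hx, rfl⟩, rfl⟩,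
    fun x hx => mem_iUnion.2 ⟨f x, htV _ ⟨hx, rfl⟩, rfl⟩, ?_⟩
  simp only [disjoint_iUnion_left, disjoint_iUnion_right]
  intro i j
  rw [disjoint_left]
  rintro x ⟨hxU, rfl⟩ ⟨hxV, hj⟩
  exact disjoint_left.1 (hUV (f x)) hxU (hj ▸ hxV)

theorem Subgroup.coe_closure_eq_iUnion_pow {G : Type*} [Group G] {V : Set G} (hV : V⁻¹ = V) :
    (Subgroup.closure V : Set G) = ⋃ n : ℕ, V ^ n := by
  refine Subset.antisymm (fun x hx => ?_) (iUnion_subset fun n => ?_)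
  · induction hx using Subgroup.closure_induction with
    | mem y hy => exact mem_iUnion.2 ⟨1, by rwa [pow_one]⟩
    | one => exact mem_iUnion.2 ⟨0, by rw [pow_zero]; exact Set.mem_one.2 rfl⟩
    | mul a b _ _ ha hb =>
      obtain ⟨m, hm⟩ := mem_iUnion.1 ha
      obtain ⟨n, hn⟩ := mem_iUnion.1 hb
      exact mem_iUnion.2 ⟨m + n, by rw [pow_add]; exact mul_mem_mul hm hn⟩
    | inv a _ ha =>
      obtain ⟨n, hn⟩ := mem_iUnion.1 ha
      exact mem_iUnion.2 ⟨n, by rw [← hV, inv_pow]; exact inv_mem_inv.2 hn⟩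
  · exact Subgroup.pow_subset Subgroup.subset_closure

theorem IsCompact.pow {M : Type*} [Monoid M] [TopologicalSpace M] [ContinuousMul M] {K : Set M}
    (hK : IsCompact K) (n : ℕ) : IsCompact (K ^ n) := by
  induction n with
  | zero => rw [pow_zero, ← singleton_one]; exact isCompact_singleton
  | succ n ih => rw [pow_succ]; exact ih.mul hK

theorem exists_isOpen_isSigmaCompact_subgroup (G : Type*) [Group G] [TopologicalSpace G]
    [IsTopologicalGroup G] [WeaklyLocallyCompactSpace G] :
    ∃ H : Subgroup G, IsOpen (H : Set G) ∧ IsSigmaCompact (H : Set G) := by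
  obtain ⟨K, hK, hK1⟩ := exists_compact_mem_nhds (1 : G)
  set V := K ∪ K⁻¹
  have hV1 : V ∈ nhds (1 : G) := Filter.mem_of_superset hK1 subset_union_left
  have hVinv : V⁻¹ = V := by simp only [V, union_inv, inv_inv, union_comm]
  have hVc : IsCompact V := hK.union hK.inv
  refine ⟨Subgroup.closure V,
    Subgroup.isOpen_of_mem_nhds _ (Filter.mem_of_superset hV1 Subgroup.subset_closure),
    ⟨fun n => V ^ n, fun n => hVc.pow n, (Subgroup.coe_closure_eq_iUnion_pow hVinv).symm⟩⟩

theorem IsTopologicalGroup.normalSpace (G : Type*) [Group G] [TopologicalSpace G]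
    [IsTopologicalGroup G] [LocallyCompactSpace G] [T2Space G] : NormalSpace G := by
  obtain ⟨H, hHo, hHσ⟩ := exists_isOpen_isSigmaCompact_subgroup G
  have coset : ∀ g : G, (QuotientGroup.mk : G → G ⧸ H) ⁻¹' {(g : G ⧸ H)} = g • (H : Set G) := by
    intro g
    rw [← image_singleton, QuotientGroup.preimage_image_mk_eq_mul, singleton_mul]
    rfl
  refine NormalSpace.of_isOpen_fibers (QuotientGroup.mk : G → G ⧸ H)
    (QuotientGroup.induction_on · fun g => ?_) (QuotientGroup.induction_on · fun g => ?_)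
  · rw [coset]
    exact hHo.smul g
  · rw [coset]
    have := (hHo.smul g).locallyCompactSpace
    have := isSigmaCompact_iff_sigmaCompactSpace.1
      (by simpa only [image_smul] using hHσ.image (continuous_const_smul g))
    infer_instance

section Cryptogroup

variable {S : Type*} [Semigroup S]

theorem greenH_refl (a : S) : greenH a a := ⟨rfl, rfl⟩

theorem greenH.symm {a b : S} (h : greenH a b) : greenH b a := ⟨h.1.symm, h.2.symm⟩

theorem greenH.trans {a b c : S} (h : greenH a b) (h' : greenH b c) : greenH a c :=
  ⟨h.1.trans h'.1, h.2.trans h'.2⟩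

def greenHSetoid (S : Type*) [Semigroup S] : Setoid S :=
  ⟨greenH, greenH_refl, greenH.symm, greenH.trans⟩

theorem greenHSetoid_mk_preimage_singleton (x : S) :
    Quotient.mk (greenHSetoid S) ⁻¹' {Quotient.mk (greenHSetoid S) x} = HClass x := by
  ext y
  exact Quotient.eq (r := greenHSetoid S)

theorem CryptoOps.idp_eq_of_greenH (ops : CryptoOps S) {x y : S} (h : greenH y x) :
    ops.idp y = ops.idp x :=
  calc ops.idp y = ops.idp y * ops.idp x := (ops.mul_idp x _ ((ops.idp_mem y).trans h)).symm
    _ = ops.idp x := ops.idp_mul y _ ((ops.idp_mem x).trans h.symm)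

theorem greenH_mul_self (ops : CryptoOps S) (hcong : HIsCongruence S) (x : S) :
    greenH (x * x) x := by
  have h := (hcong _ _ x (ops.idp_mem x)).2
  rw [ops.mul_idp x x (greenH_refl x)] at h
  exact h.symm

theorem greenH_mul (ops : CryptoOps S) (hcong : HIsCongruence S) {x a b : S}
    (ha : greenH a x) (hb : greenH b x) : greenH (a * b) x :=
  ((hcong _ _ a hb).2.trans (hcong _ _ x ha).1).trans (greenH_mul_self ops hcong x)

abbrev CryptoOps.hClassGroup (ops : CryptoOps S) (hcong : HIsCongruence S) (e : S) :
    Group (HClass e) :=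
  letI : Mul (HClass e) := ⟨fun a b => ⟨a * b, greenH_mul ops hcong a.2 b.2⟩⟩
  letI : One (HClass e) := ⟨⟨ops.idp e, ops.idp_mem e⟩⟩
  letI : Inv (HClass e) := ⟨fun a => ⟨ops.inv a, (ops.inv_mem a).trans a.2⟩⟩
  Group.ofLeftAxioms (fun a b c => Subtype.ext (mul_assoc (a : S) b c))
    (fun a => Subtype.ext (ops.idp_mul e a a.2))
    (fun a => Subtype.ext ((ops.inv_mul a).trans (ops.idp_eq_of_greenH a.2)))

theorem CryptoOps.normalSpace_hClass [TopologicalSpace S] [ContinuousMul S]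
    [LocallyCompactSpace S] [T2Space S] (ops : CryptoOps S) (hcong : HIsCongruence S)
    (hinv : Continuous ops.inv) {e : S} (he : IsOpen (HClass e)) : NormalSpace (HClass e) := by
  let := ops.hClassGroup hcong e
  have : IsTopologicalGroup (HClass e) :=
    { continuous_mul := ((continuous_subtype_val.comp continuous_fst).mul
          (continuous_subtype_val.comp continuous_snd)).subtype_mk _
      continuous_inv := (hinv.comp continuous_subtype_val).subtype_mk _ }
  have := he.locallyCompactSpace
  exact IsTopologicalGroup.normalSpace _

end Cryptogroup

/-- Every locally compact Hausdorff band of topological groups is normal. -/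
theorem stmt11 {S : Type*} [Semigroup S] [TopologicalSpace S] [ContinuousMul S]
    (ops : CryptoOps S) (hcrypt : IsCryptogroup S)
    (hinv : Continuous ops.inv) (hopen : ∀ x : S, IsOpen (HClass x))
    [LocallyCompactSpace S] [T2Space S] :
    NormalSpace S := by
  refine NormalSpace.of_isOpen_fibers (Quotient.mk (greenHSetoid S))
    (Quotient.ind fun x => ?_) (Quotient.ind fun x => ?_)
  · rw [greenHSetoid_mk_preimage_singleton]
    exact hopen x
  · rw [greenHSetoid_mk_preimage_singleton]
    exact ops.normalSpace_hClass hcrypt.2 hinv (hopen x)
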